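/- arXiv:1710.07182 — 2 statements merged into one kernel-verified Lean document; each statement's English description precedes it below -/
import Mathlib

section
/- Let P be integrable on [a,b] and m a nonnegative integer. Suppose ∫_a^b P(y)(b-y)^i/i! dy = 0 for all i ∈ {0,1,...,m} and ∫_a^s P(y)(s-y)^m/m! dy ≥ 0 for all s ∈ [a,b]. Then ∫_a^b P(y)f(y) dy ≥ 0 for every f ∈ C^{m+1}([a,b]) satisfying (-1)^{m+1} f^{(m+1)} ≥ 0 on [a,b]. -/
/-!
Taylor's formula at `b` writes `f y` as a polynomial of degree `m` in `b - y` minus the remainder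
`∫ t in y..b, (y - t) ^ m / m ! * f⁽ᵐ⁺¹⁾ t`. The vanishing moments of `P` kill the polynomial part,
and exchanging the order of integration over the triangle `a ≤ y ≤ t ≤ b` turns `∫ P f` into
`∫ t in a..b, Φ t * ((-1) ^ (m + 1) * f⁽ᵐ⁺¹⁾ t)` with `Φ t = ∫ y in a..t, P y * (t - y) ^ m / m !`,
the integral of a product of two nonnegative functions.
-/

open MeasureTheory intervalIntegral Set

open scoped Nat

theorem iteratedDerivWithin_subset {𝕜 F : Type*} [NontriviallyNormedField 𝕜]
    [NormedAddCommGroup F] [NormedSpace 𝕜 F] {f : 𝕜 → F} {s t : Set 𝕜} {n : ℕ} {x : 𝕜}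
    (st : s ⊆ t) (hs : UniqueDiffOn 𝕜 s) (ht : UniqueDiffOn 𝕜 t) (hf : ContDiffOn 𝕜 n f t)
    (hx : x ∈ s) : iteratedDerivWithin n f s x = iteratedDerivWithin n f t x := by
  simp only [iteratedDerivWithin_eq_iteratedFDerivWithin,
    iteratedFDerivWithin_subset st hs ht hf hx]

theorem taylorWithinEval_Icc_sub_eq_integral {f : ℝ → ℝ} {a b y : ℝ} {n : ℕ}
    (hf : ContDiffOn ℝ (n + 1) f (Icc a b)) (hy : y ∈ Icc a b) :
    taylorWithinEval f n (Icc a b) b y - f y =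
      ∫ t in y..b, (y - t) ^ n / n ! * iteratedDerivWithin (n + 1) f (Icc a b) t := by
  rcases hy.2.eq_or_lt with rfl | hyb
  · simp
  have hsub : uIcc b y ⊆ Icc a b := by
    rw [uIcc_of_ge hyb.le]
    exact Icc_subset_Icc_left hy.1
  have hderiv : ∀ k ≤ n + 1, ∀ x ∈ uIcc b y,
      iteratedDerivWithin k f (uIcc b y) x = iteratedDerivWithin k f (Icc a b) x :=
    fun k hk x hx => iteratedDerivWithin_subset hsub (uniqueDiffOn_uIcc hyb.ne')
      (uniqueDiffOn_Icc (hy.1.trans_lt hyb)) (hf.of_le (by exact_mod_cast hk)) hx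
  have htaylor : taylorWithinEval f n (uIcc b y) b y = taylorWithinEval f n (Icc a b) b y := by
    simp only [taylor_within_apply]
    refine Finset.sum_congr rfl fun k hk => ?_
    rw [hderiv k (Finset.mem_range.mp hk).le b left_mem_uIcc]
  rw [← htaylor, integral_symm, ← neg_sub, taylor_integral_remainder (hf.mono hsub)]
  refine congrArg Neg.neg (integral_congr fun t ht => ?_)
  rw [smul_eq_mul, hderiv (n + 1) le_rfl t ht]

section Triangle

variable {E : Type*} [NormedAddCommGroup E] [NormedSpace ℝ E] {a b : ℝ}

theorem intervalIntegral_eq_setIntegral_indicator_Ici {f : ℝ → E} {y : ℝ} (hy : y ∈ Icc a b) :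
    ∫ t in y..b, f t = ∫ t in Icc a b, (Ici y).indicator f t := by
  have hIcc : Icc a b ∩ Ici y = Icc y b := by
    ext t; simp only [mem_inter_iff, mem_Icc, mem_Ici]; grind
  rw [integral_of_le hy.2, ← integral_Icc_eq_integral_Ioc, ← hIcc,
    setIntegral_indicator measurableSet_Ici]

theorem intervalIntegral_eq_setIntegral_indicator_Iic {f : ℝ → E} {t : ℝ} (ht : t ∈ Icc a b) :
    ∫ y in a..t, f y = ∫ y in Icc a b, (Iic t).indicator f y := by
  have hIcc : Icc a b ∩ Iic t = Icc a t := by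
    ext y; simp only [mem_inter_iff, mem_Icc, mem_Iic]; grind
  rw [integral_of_le ht.1, ← integral_Icc_eq_integral_Ioc, ← hIcc,
    setIntegral_indicator measurableSet_Iic]

theorem intervalIntegral_intervalIntegral_swap_triangle (hab : a ≤ b) {K : ℝ → ℝ → E}
    (hK : Integrable (Function.uncurry K)
      ((volume.restrict (Icc a b)).prod (volume.restrict (Icc a b)))) :
    ∫ y in a..b, ∫ t in y..b, K y t = ∫ t in a..b, ∫ y in a..t, K y t := by
  have hF := hK.indicator (isClosed_le continuous_fst continuous_snd).measurableSet
  rw [integral_of_le hab, integral_of_le hab, ← integral_Icc_eq_integral_Ioc,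
    ← integral_Icc_eq_integral_Ioc,
    setIntegral_congr_fun measurableSet_Icc fun y hy =>
      intervalIntegral_eq_setIntegral_indicator_Ici (f := K y) hy,
    setIntegral_congr_fun measurableSet_Icc fun t ht =>
      intervalIntegral_eq_setIntegral_indicator_Iic (f := fun y => K y t) ht]
  exact integral_integral_swap hF

end Triangle

theorem intervalIntegral_mul_intervalIntegral_swap {a b : ℝ} (hab : a ≤ b) {P : ℝ → ℝ}
    (hP : IntervalIntegrable P volume a b) {H : ℝ → ℝ → ℝ}
    (hH : ContinuousOn (Function.uncurry H) (Icc a b ×ˢ Icc a b)) :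
    ∫ y in a..b, P y * ∫ t in y..b, H y t = ∫ t in a..b, ∫ y in a..t, P y * H y t := by
  set μ := volume.restrict (Icc a b)
  have hμ : μ.prod μ = volume.restrict (Icc a b ×ˢ Icc a b) := by
    rw [Measure.prod_restrict, Measure.volume_eq_prod]
  have hPμ : Integrable P μ := (intervalIntegrable_iff_integrableOn_Icc_of_le hab).mp hP
  obtain ⟨C, hC⟩ := (isCompact_Icc.prod isCompact_Icc).exists_bound_of_continuousOn hH
  have hK : Integrable (fun p : ℝ × ℝ => P p.1 * H p.1 p.2) (μ.prod μ) := by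
    refine (hPμ.comp_fst μ).mul_bdd (c := C) ?_ ?_
    · rw [hμ]
      exact hH.aestronglyMeasurable (measurableSet_Icc.prod measurableSet_Icc)
    · rw [hμ]
      exact ae_restrict_of_forall_mem (measurableSet_Icc.prod measurableSet_Icc) hC
  simp_rw [← intervalIntegral.integral_const_mul]
  exact intervalIntegral_intervalIntegral_swap_triangle hab hK

theorem integral_mul_taylorWithinEval_eq_zero {a b : ℝ} {m : ℕ} {P : ℝ → ℝ}
    (hP : IntervalIntegrable P volume a b)
    (hmom : ∀ i ≤ m, ∫ y in a..b, P y * (b - y) ^ i / i ! = 0) (f : ℝ → ℝ) (s : Set ℝ) :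
    ∫ y in a..b, P y * taylorWithinEval f m s b y = 0 := by
  have hexpand : ∀ y, P y * taylorWithinEval f m s b y = ∑ k ∈ Finset.range (m + 1),
      P y * (b - y) ^ k / k ! * ((-1) ^ k * iteratedDerivWithin k f s b) := by
    intro y
    rw [taylor_within_apply, Finset.mul_sum]
    refine Finset.sum_congr rfl fun k _ => ?_
    rw [smul_eq_mul, show y - b = -(b - y) by ring, neg_pow]
    ring
  simp_rw [hexpand]
  rw [integral_finsetSum fun k _ => ((hP.mul_continuousOn (by fun_prop)).div_const _).mul_const _]
  refine Finset.sum_eq_zero fun k hk => ?_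
  rw [intervalIntegral.integral_mul_const, hmom k (Finset.mem_range_succ_iff.mp hk), zero_mul]

theorem integral_mul_eq_integral_peanoKernel_mul {a b : ℝ} (hab : a < b) {m : ℕ} {P : ℝ → ℝ}
    (hP : IntervalIntegrable P volume a b)
    (hmom : ∀ i ≤ m, ∫ y in a..b, P y * (b - y) ^ i / i ! = 0) {f : ℝ → ℝ}
    (hf : ContDiffOn ℝ (m + 1) f (Icc a b)) :
    ∫ y in a..b, P y * f y = ∫ t in a..b, (∫ y in a..t, P y * (t - y) ^ m / m !) *
      ((-1) ^ (m + 1) * iteratedDerivWithin (m + 1) f (Icc a b) t) := by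
  set g := iteratedDerivWithin (m + 1) f (Icc a b)
  have hg : ContinuousOn g (Icc a b) :=
    hf.continuousOn_iteratedDerivWithin le_rfl (uniqueDiffOn_Icc hab)
  have hH : ContinuousOn (Function.uncurry fun y t => (y - t) ^ m / m ! * g t)
      (Icc a b ×ˢ Icc a b) :=
    (by fun_prop : Continuous fun p : ℝ × ℝ => (p.1 - p.2) ^ m / m !).continuousOn.mul
      (hg.comp continuousOn_snd fun p hp => hp.2)
  have hPT : IntervalIntegrable (fun y => P y * taylorWithinEval f m (Icc a b) b y) volume a b :=
    hP.mul_continuousOn (by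
      rw [funext (taylor_within_apply f m (Icc a b) b)]
      fun_prop)
  have hPf : IntervalIntegrable (fun y => P y * f y) volume a b :=
    hP.mul_continuousOn (hf.continuousOn.mono (by rw [uIcc_of_le hab.le]))
  calc ∫ y in a..b, P y * f y
      = -∫ y in a..b, P y * (taylorWithinEval f m (Icc a b) b y - f y) := by
        simp_rw [mul_sub]
        rw [integral_sub hPT hPf, integral_mul_taylorWithinEval_eq_zero hP hmom, zero_sub, neg_neg]
    _ = -∫ y in a..b, P y * ∫ t in y..b, (y - t) ^ m / m ! * g t := by
        refine congrArg Neg.neg (integral_congr fun y hy => ?_)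
        rw [uIcc_of_le hab.le] at hy
        rw [taylorWithinEval_Icc_sub_eq_integral hf hy]
    _ = -∫ t in a..b, ∫ y in a..t, P y * ((y - t) ^ m / m ! * g t) :=
        by rw [intervalIntegral_mul_intervalIntegral_swap hab.le hP hH]
    _ = ∫ t in a..b, (∫ y in a..t, P y * (t - y) ^ m / m !) * ((-1) ^ (m + 1) * g t) := by
        rw [← intervalIntegral.integral_neg]
        refine integral_congr fun t _ => ?_
        rw [← intervalIntegral.integral_mul_const, ← intervalIntegral.integral_neg]
        refine integral_congr fun y _ => ?_
        rw [show y - t = -(t - y) by ring, neg_pow]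
        ring

theorem stmt_1 (a b : ℝ) (hab : a < b) (m : ℕ) (P : ℝ → ℝ)
    (hP : IntervalIntegrable P volume a b)
    (hmom : ∀ i ≤ m, ∫ y in a..b, P y * (b - y) ^ i / (Nat.factorial i) = 0)
    (hpos : ∀ s ∈ Set.Icc a b, 0 ≤ ∫ y in a..s, P y * (s - y) ^ m / (Nat.factorial m)) :
    ∀ f : ℝ → ℝ, ContDiffOn ℝ (m + 1) f (Set.Icc a b) →
      (∀ y ∈ Set.Icc a b, 0 ≤ (-1 : ℝ) ^ (m + 1) * iteratedDerivWithin (m + 1) f (Set.Icc a b) y) →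
      0 ≤ ∫ y in a..b, P y * f y := by
  intro f hf hsign
  rw [integral_mul_eq_integral_peanoKernel_mul hab hP hmom hf]
  exact integral_nonneg hab.le fun t ht => mul_nonneg (hpos t ht) (hsign t ht)
end

section
/- Let P be integrable on [a,b] and m a nonnegative integer. If ∫_a^b P(y)f(y) dy ≥ 0 holds for every f ∈ C^{m+1}([a,b]) with (-1)^{m+1}f^{(m+1)} ≥ 0 on [a,b], then ∫_a^b P(y)(b-y)^i/i! dy = 0 for all i ∈ {0,...,m} and ∫_a^s P(y)(s-y)^m/m! dy ≥ 0 for all s ∈ [a,b]. -/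
/-!
Testing against `±(b - y)ⁱ / i!`, whose `(m+1)`-st derivative vanishes, gives the equalities.
The truncated power `(s - y)₊ᵐ / m!` is not smooth enough to be tested directly, so we smear
it out: for continuous `ψ ≥ 0` the `(m+1)`-fold primitive `f = ∫_y^b ⋯ ∫ ψ` is admissible,
as `(-1)^(m+1) f^(m+1) = ψ`, and Fubini over triangles turns `∫ₐᵇ P f` into `∫ₐᵇ F ψ` with
`F t = ∫ₐᵗ P(y) (t - y)ᵐ / m! dy`. Since `F` is continuous and `ψ ≥ 0` is arbitrary,
`F ≥ 0` on `[a, b]`.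
-/

open MeasureTheory intervalIntegral Set Function Nat

theorem IntervalIntegrable.integrableOn_Ioc_prod_mul {a b : ℝ} {Q : ℝ → ℝ}
    (hQ : IntervalIntegrable Q volume a b) (hab : a ≤ b) {K : ℝ → ℝ → ℝ}
    (hK : Continuous (uncurry K)) :
    IntegrableOn (fun p : ℝ × ℝ => Q p.2 * K p.1 p.2) (Ioc a b ×ˢ Ioc a b) := by
  have hQ' : IntegrableOn Q (Ioc a b) := (intervalIntegrable_iff_integrableOn_Ioc_of_le hab).1 hQ
  obtain ⟨C, hC⟩ : ∃ C, ∀ p ∈ Icc a b ×ˢ Icc a b, ‖uncurry K p‖ ≤ C :=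
    (isCompact_Icc.prod isCompact_Icc).exists_bound_of_continuousOn hK.continuousOn
  rw [IntegrableOn, Measure.volume_eq_prod, ← Measure.prod_restrict]
  refine ((integrable_const C).mul_prod hQ'.norm).mono' ?_ ?_
  · exact (hQ'.aestronglyMeasurable.comp_quasiMeasurePreserving
      Measure.quasiMeasurePreserving_snd).mul hK.aestronglyMeasurable
  · rw [Measure.prod_restrict]
    filter_upwards [ae_restrict_mem (measurableSet_Ioc.prod measurableSet_Ioc)] with p hp
    rw [norm_mul, mul_comm]
    exact mul_le_mul_of_nonneg_right
      (hC p ⟨Ioc_subset_Icc_self hp.1, Ioc_subset_Icc_self hp.2⟩) (norm_nonneg _)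

theorem integral_integral_swap_triangle {a b : ℝ} (hab : a ≤ b) {Q : ℝ → ℝ}
    (hQ : IntervalIntegrable Q volume a b) {K : ℝ → ℝ → ℝ} (hK : Continuous (uncurry K)) :
    ∫ t in a..b, ∫ y in a..t, Q y * K t y = ∫ y in a..b, Q y * ∫ t in y..b, K t y := by
  set μ := volume.restrict (Ioc a b)
  set g : ℝ × ℝ → ℝ := {p | p.2 ≤ p.1}.indicator fun p => Q p.2 * K p.1 p.2
  have hg : Integrable g (μ.prod μ) := by
    rw [Measure.prod_restrict, ← Measure.volume_eq_prod]
    exact (hQ.integrableOn_Ioc_prod_mul hab hK).indicator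
      (measurableSet_le measurable_snd measurable_fst)
  have inner_left : ∀ t ∈ Ioc a b, ∫ y, g (t, y) ∂μ = ∫ y in a..t, Q y * K t y := by
    intro t ht
    have hsec : (fun y => g (t, y)) = (Iic t).indicator fun y => Q y * K t y := rfl
    rw [hsec, MeasureTheory.integral_indicator measurableSet_Iic,
      Measure.restrict_restrict measurableSet_Iic, Iic_inter_Ioc_of_le ht.2, integral_of_le ht.1.le]
  have inner_right : ∀ y ∈ Ioc a b, ∫ t, g (t, y) ∂μ = Q y * ∫ t in y..b, K t y := by
    intro y hy
    have hsec : (fun t => g (t, y)) = (Ici y).indicator fun t => Q y * K t y := rfl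
    have hIcc : Ici y ∩ Ioc a b = Icc y b := by
      ext u
      simp only [mem_inter_iff, mem_Ici, mem_Ioc, mem_Icc]
      exact ⟨fun h => ⟨h.1, h.2.2⟩, fun h => ⟨h.1, hy.1.trans_le h.1, h.2⟩⟩
    rw [hsec, MeasureTheory.integral_indicator measurableSet_Ici,
      Measure.restrict_restrict measurableSet_Ici, hIcc, integral_Icc_eq_integral_Ioc,
      ← integral_of_le hy.2, intervalIntegral.integral_const_mul]
  rw [integral_of_le hab, integral_of_le hab]
  calc ∫ t in Ioc a b, ∫ y in a..t, Q y * K t y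
      = ∫ t, ∫ y, g (t, y) ∂μ ∂μ :=
        setIntegral_congr_fun measurableSet_Ioc fun t ht => (inner_left t ht).symm
    _ = ∫ y, ∫ t, g (t, y) ∂μ ∂μ := integral_integral_swap hg
    _ = ∫ y in Ioc a b, Q y * ∫ t in y..b, K t y :=
        setIntegral_congr_fun measurableSet_Ioc inner_right

theorem integral_sub_pow_div_factorial (y t : ℝ) (k : ℕ) :
    ∫ u in y..t, (u - y) ^ k / (k ! : ℝ) = (t - y) ^ (k + 1) / ((k + 1) ! : ℝ) := by
  rw [intervalIntegral.integral_div, intervalIntegral.integral_comp_sub_right (· ^ k), sub_self,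
    integral_pow, zero_pow k.succ_ne_zero, sub_zero, factorial_succ]
  push_cast
  field_simp

noncomputable def primitiveFrom (a : ℝ) (f : ℝ → ℝ) (t : ℝ) : ℝ := ∫ y in a..t, f y

noncomputable def primitiveTo (b : ℝ) (f : ℝ → ℝ) (y : ℝ) : ℝ := ∫ t in y..b, f t

section primitiveFrom

variable {a b : ℝ} {f : ℝ → ℝ}

theorem continuousOn_primitiveFrom (hf : IntervalIntegrable f volume a b) :
    ContinuousOn (primitiveFrom a f) (uIcc a b) :=
  continuousOn_primitive_interval' hf left_mem_uIcc

theorem intervalIntegrable_iterate_primitiveFrom (hf : IntervalIntegrable f volume a b) :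
    ∀ k, IntervalIntegrable ((primitiveFrom a)^[k] f) volume a b
  | 0 => hf
  | k + 1 => by
    rw [iterate_succ']
    exact (continuousOn_primitiveFrom
      (intervalIntegrable_iterate_primitiveFrom hf k)).intervalIntegrable

/-- Cauchy's formula for repeated integration. -/
theorem iterate_primitiveFrom_succ_apply (k : ℕ) {t : ℝ} (hat : a ≤ t)
    (hf : IntervalIntegrable f volume a t) :
    (primitiveFrom a)^[k + 1] f t = ∫ y in a..t, f y * ((t - y) ^ k / (k ! : ℝ)) := by
  induction k generalizing t with
  | zero => simp [primitiveFrom]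
  | succ k ih =>
    rw [iterate_succ_apply', primitiveFrom]
    calc ∫ u in a..t, (primitiveFrom a)^[k + 1] f u
        = ∫ u in a..t, ∫ y in a..u, f y * ((u - y) ^ k / (k ! : ℝ)) := by
          refine integral_congr fun u hu => ?_
          rw [uIcc_of_le hat] at hu
          exact ih hu.1 (hf.mono_set (uIcc_subset_uIcc_left (by rwa [uIcc_of_le hat])))
      _ = ∫ y in a..t, f y * ∫ u in y..t, (u - y) ^ k / (k ! : ℝ) :=
          integral_integral_swap_triangle hat hf (by fun_prop)
      _ = ∫ y in a..t, f y * ((t - y) ^ (k + 1) / ((k + 1) ! : ℝ)) := by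
          simp only [integral_sub_pow_div_factorial]

end primitiveFrom

section primitiveTo

variable {f : ℝ → ℝ}

theorem hasDerivAt_primitiveTo (hf : Continuous f) (b y : ℝ) :
    HasDerivAt (primitiveTo b f) (-f y) y :=
  integral_hasDerivAt_left (hf.intervalIntegrable _ _) (hf.stronglyMeasurableAtFilter _ _)
    hf.continuousAt

theorem deriv_primitiveTo (hf : Continuous f) (b : ℝ) : deriv (primitiveTo b f) = -f :=
  funext fun y => (hasDerivAt_primitiveTo hf b y).deriv

theorem ContDiff.primitiveTo {k : ℕ} (hf : ContDiff ℝ k f) (b : ℝ) :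
    ContDiff ℝ (k + 1) (primitiveTo b f) := by
  rw [contDiff_succ_iff_deriv, deriv_primitiveTo hf.continuous]
  exact ⟨fun y => (hasDerivAt_primitiveTo hf.continuous b y).differentiableAt, by simp, hf.neg⟩

theorem contDiff_iterate_primitiveTo (hf : Continuous f) (b : ℝ) :
    ∀ k : ℕ, ContDiff ℝ k ((primitiveTo b)^[k] f)
  | 0 => contDiff_zero.2 hf
  | k + 1 => by
    rw [iterate_succ_apply']
    exact_mod_cast (contDiff_iterate_primitiveTo hf b k).primitiveTo b

theorem iteratedDeriv_iterate_primitiveTo (hf : Continuous f) (b : ℝ) (k : ℕ) (y : ℝ) :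
    iteratedDeriv k ((primitiveTo b)^[k] f) y = (-1) ^ k * f y := by
  induction k with
  | zero => simp
  | succ k ih =>
    rw [iterate_succ_apply', iteratedDeriv_succ',
      deriv_primitiveTo (contDiff_iterate_primitiveTo hf b k).continuous, iteratedDeriv_neg, ih,
      pow_succ]
    ring

end primitiveTo

theorem integral_mul_primitiveTo {a b : ℝ} (hab : a ≤ b) {Q g : ℝ → ℝ}
    (hQ : IntervalIntegrable Q volume a b) (hg : Continuous g) :
    ∫ y in a..b, Q y * primitiveTo b g y = ∫ t in a..b, primitiveFrom a Q t * g t := by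
  simp only [primitiveTo, primitiveFrom]
  rw [← integral_integral_swap_triangle hab hQ (K := fun t _ => g t) (by fun_prop)]
  exact integral_congr fun t _ => intervalIntegral.integral_mul_const _ _

theorem integral_mul_iterate_primitiveTo {a b : ℝ} (hab : a ≤ b) {h : ℝ → ℝ}
    (hh : Continuous h) (k : ℕ) {Q : ℝ → ℝ} (hQ : IntervalIntegrable Q volume a b) :
    ∫ y in a..b, Q y * (primitiveTo b)^[k] h y = ∫ t in a..b, (primitiveFrom a)^[k] Q t * h t := by
  induction k generalizing Q with
  | zero => rfl
  | succ k ih =>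
    rw [iterate_succ_apply',
      integral_mul_primitiveTo hab hQ (contDiff_iterate_primitiveTo hh b k).continuous,
      ih (continuousOn_primitiveFrom hQ).intervalIntegrable, iterate_succ_apply]

theorem nonneg_of_forall_integral_mul_nonneg {a b : ℝ} (hab : a < b) {F : ℝ → ℝ}
    (hF : ContinuousOn F (Icc a b))
    (h : ∀ ψ : ℝ → ℝ, Continuous ψ → (∀ t, 0 ≤ ψ t) → 0 ≤ ∫ t in a..b, F t * ψ t)
    {s : ℝ} (hs : s ∈ Icc a b) : 0 ≤ F s := by
  by_contra! hFs
  -- test against the negative part of `F`, extended continuously off `[a, b]`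
  set ψ : ℝ → ℝ := fun t => max 0 (-F (projIcc a b hab.le t))
  have hψ : Continuous ψ :=
    continuous_const.max (hF.comp_continuous (continuous_subtype_val.comp continuous_projIcc)
      fun t => (projIcc a b hab.le t).2).neg
  have hψF : ∀ t ∈ Icc a b, ψ t = max 0 (-F t) := fun t ht => by
    simp only [ψ, projIcc_of_mem hab.le ht]
  have hlt : ∫ t in a..b, F t * ψ t < ∫ _ in a..b, (0 : ℝ) := by
    refine integral_lt_integral_of_continuousOn_of_le_of_exists_lt hab
      (hF.mul hψ.continuousOn) continuousOn_const (fun t ht => ?_) ⟨s, hs, ?_⟩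
    · rw [hψF t (Ioc_subset_Icc_self ht)]
      rcases le_total 0 (F t) with hFt | hFt
      · rw [max_eq_left (by linarith)]; simp
      · exact mul_nonpos_of_nonpos_of_nonneg hFt (le_max_left _ _)
    · rw [hψF s hs, max_eq_right (by linarith)]
      nlinarith
  rw [intervalIntegral.integral_zero] at hlt
  exact hlt.not_ge (h ψ hψ fun t => le_max_left _ _)

theorem stmt_2 (a b : ℝ) (hab : a < b) (m : ℕ) (P : ℝ → ℝ)
    (hP : IntervalIntegrable P volume a b)
    (h : ∀ f : ℝ → ℝ, ContDiffOn ℝ (m + 1) f (Set.Icc a b) →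
      (∀ y ∈ Set.Icc a b, 0 ≤ (-1 : ℝ) ^ (m + 1) * iteratedDerivWithin (m + 1) f (Set.Icc a b) y) →
      0 ≤ ∫ y in a..b, P y * f y) :
    (∀ i ≤ m, ∫ y in a..b, P y * (b - y) ^ i / (Nat.factorial i) = 0) ∧
    (∀ s ∈ Set.Icc a b, 0 ≤ ∫ y in a..s, P y * (s - y) ^ m / (Nat.factorial m)) := by
  have htest : ∀ f : ℝ → ℝ, ContDiff ℝ (m + 1) f →
      (∀ y ∈ Icc a b, 0 ≤ (-1 : ℝ) ^ (m + 1) * iteratedDeriv (m + 1) f y) →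
      0 ≤ ∫ y in a..b, P y * f y := fun f hf hsign =>
    h f hf.contDiffOn fun y hy => by
      rw [iteratedDerivWithin_eq_iteratedDeriv (uniqueDiffOn_Icc hab)
        (by exact_mod_cast hf.contDiffAt) hy]
      exact hsign y hy
  simp only [mul_div_assoc]
  refine ⟨fun i hi => ?_, fun s hs => ?_⟩
  · set f : ℝ → ℝ := fun y => (b - y) ^ i / (i ! : ℝ)
    have hf : ContDiff ℝ (m + 1) f := by fun_prop
    have hder : ∀ y, iteratedDeriv (m + 1) f y = 0 := fun y => by
      simp [f, iteratedDeriv_comp_const_sub (f := fun x : ℝ => x ^ i),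
        Nat.sub_eq_zero_of_le hi]
    have h₁ := htest f hf (by simp [hder])
    have h₂ := htest (-f) hf.neg (by simp [hder])
    simp only [Pi.neg_apply, mul_neg, intervalIntegral.integral_neg] at h₂
    linarith
  · have hPs : IntervalIntegrable P volume a s :=
      hP.mono_set (uIcc_subset_uIcc_left (by rwa [uIcc_of_le hab.le]))
    rw [← iterate_primitiveFrom_succ_apply m hs.1 hPs]
    refine nonneg_of_forall_integral_mul_nonneg hab ?_ (fun ψ hψ hψ0 => ?_) hs
    · rw [iterate_succ', ← uIcc_of_le hab.le]
      exact continuousOn_primitiveFrom (intervalIntegrable_iterate_primitiveFrom hP m)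
    · rw [← integral_mul_iterate_primitiveTo hab.le hψ (m + 1) hP]
      refine htest _ (contDiff_iterate_primitiveTo hψ b (m + 1)) fun y _ => ?_
      rw [iteratedDeriv_iterate_primitiveTo hψ, ← mul_assoc, ← mul_pow]
      simpa using hψ0 y
end
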